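/- arXiv:1804.06959 — 3 statements merged into one kernel-verified Lean document; each statement's English description precedes it below -/
import Mathlib

section
/- There exists a function f : ℕ × ℕ → ℕ such that if 𝒮 is a collection of distinct s-element sets with |𝒮| ≥ f(s,n), then there is a subcollection 𝒮' ⊆ 𝒮 with |𝒮'| = n and a set J with 0 ≤ |J| < s such that S₁ ∩ S₂ = J for all distinct S₁, S₂ ∈ 𝒮'. -/
/-!
Erdős–Rado. Take a maximal pairwise disjoint subfamily `D` of `𝒮`; if it has more than `m`
members it is a sunflower with empty core. Otherwise its union has at most `s * m` points and
meets every member of `𝒮`, so some point `x` lies in more than `|𝒮| / (s * m)` members. By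
induction on `s` the link of `x` (the `(s - 1)`-sets `S \ {x}` with `x ∈ S ∈ 𝒮`) contains a
sunflower of `m + 1` sets, and putting `x` back into its petals and core gives one in `𝒮`.
Hence `s! * m ^ s < |𝒮|` suffices.
-/

universe u

open Finset Nat

namespace Finset

theorem exists_pairwiseDisjoint_forall_not_disjoint {β : Type*} [Lattice β] [OrderBot β]
    [DecidableEq β] (𝒮 : Finset β) :
    ∃ D ⊆ 𝒮, (D : Set β).PairwiseDisjoint id ∧ ∀ S ∈ 𝒮, S ∉ D → ∃ T ∈ D, ¬Disjoint S T := by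
  classical
  obtain ⟨D, hD⟩ :=
    (𝒮.powerset.filter fun D : Finset β => (D : Set β).PairwiseDisjoint id).exists_maximal
      ⟨∅, by simp⟩
  obtain ⟨hD𝒮, hDdisj⟩ := by simpa using hD.prop
  refine ⟨D, hD𝒮, hDdisj, fun S hS hSD => ?_⟩
  by_contra! hSdisj
  have hins :
      insert S D ∈ 𝒮.powerset.filter fun D : Finset β => (D : Set β).PairwiseDisjoint id := by
    simp only [mem_filter, mem_powerset, coe_insert]
    exact ⟨insert_subset hS hD𝒮, hDdisj.insert fun T hT _ => hSdisj T hT⟩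
  exact hSD (hD.eq_of_le hins (subset_insert S D) ▸ mem_insert_self S D)

section Sunflower

variable {α : Type*} [DecidableEq α]

def IsSunflower (𝒮 : Finset (Finset α)) (J : Finset α) : Prop :=
  (𝒮 : Set (Finset α)).Pairwise fun S₁ S₂ => S₁ ∩ S₂ = J

theorem IsSunflower.mono {𝒮 𝒯 : Finset (Finset α)} {J : Finset α} (h : IsSunflower 𝒮 J)
    (h𝒯 : 𝒯 ⊆ 𝒮) : IsSunflower 𝒯 J :=
  Set.Pairwise.mono (coe_subset.2 h𝒯) h

theorem isSunflower_empty_of_pairwiseDisjoint {𝒮 : Finset (Finset α)}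
    (h : (𝒮 : Set (Finset α)).PairwiseDisjoint id) : IsSunflower 𝒮 ∅ :=
  h.imp fun _ _ => disjoint_iff_inter_eq_empty.1

theorem IsSunflower.image_insert {𝒮 : Finset (Finset α)} {J : Finset α} (h : IsSunflower 𝒮 J)
    (x : α) : IsSunflower (𝒮.image (insert x)) (insert x J) := by
  simp only [IsSunflower, coe_image]
  rintro _ ⟨S₁, h₁, rfl⟩ _ ⟨S₂, h₂, rfl⟩ hne
  rw [← insert_inter_distrib, h h₁ h₂ (ne_of_apply_ne _ hne)]

theorem card_memberSubfamily (𝒮 : Finset (Finset α)) (x : α) :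
    #(𝒮.memberSubfamily x) = #{S ∈ 𝒮 | x ∈ S} :=
  card_image_of_injOn fun _ h₁ _ h₂ => erase_injOn' x (mem_filter.1 h₁).2 (mem_filter.1 h₂).2

theorem card_of_mem_memberSubfamily {𝒮 : Finset (Finset α)} {x : α} {s : ℕ}
    (h𝒮 : ∀ S ∈ 𝒮, #S = s + 1) {T : Finset α} (hT : T ∈ 𝒮.memberSubfamily x) : #T = s := by
  obtain ⟨hT𝒮, hxT⟩ := mem_memberSubfamily.1 hT
  simpa [card_insert_of_notMem hxT] using h𝒮 _ hT𝒮

theorem exists_isSunflower_of_subset_memberSubfamily {𝒮 𝒯 : Finset (Finset α)} {x : α}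
    {J : Finset α} (h𝒯 : 𝒯 ⊆ 𝒮.memberSubfamily x) (hJ : IsSunflower 𝒯 J) :
    ∃ 𝒮' ⊆ 𝒮, #𝒮' = #𝒯 ∧ IsSunflower 𝒮' (insert x J) := by
  refine ⟨𝒯.image (insert x), ?_, card_image_of_injOn ?_, hJ.image_insert x⟩
  · rw [image_subset_iff]
    exact fun T hT => (mem_memberSubfamily.1 (h𝒯 hT)).1
  · intro T₁ h₁ T₂ h₂ h
    rw [← erase_insert (mem_memberSubfamily.1 (h𝒯 h₁)).2,
      ← erase_insert (mem_memberSubfamily.1 (h𝒯 h₂)).2]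
    exact congrArg (erase · x) h

theorem exists_lt_card_filter_mem_of_mul_lt_card {𝒮 : Finset (Finset α)} {A : Finset α} {k : ℕ}
    (hcover : ∀ S ∈ 𝒮, ∃ x ∈ A, x ∈ S) (hlt : #A * k < #𝒮) :
    ∃ x ∈ A, k < #{S ∈ 𝒮 | x ∈ S} := by
  refine exists_lt_of_sum_lt ?_
  calc ∑ _x ∈ A, k = #A * k := by rw [sum_const, smul_eq_mul]
    _ < #𝒮 := hlt
    _ ≤ #(A.biUnion fun x => {S ∈ 𝒮 | x ∈ S}) := card_le_card fun S hS => by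
        obtain ⟨x, hxA, hxS⟩ := hcover S hS
        exact mem_biUnion.2 ⟨x, hxA, mem_filter.2 ⟨hS, hxS⟩⟩
    _ ≤ ∑ x ∈ A, #{S ∈ 𝒮 | x ∈ S} := card_biUnion_le

theorem exists_pairwiseDisjoint_or_lt_card_filter_mem {𝒮 : Finset (Finset α)} {r m k : ℕ}
    (h𝒮 : ∀ S ∈ 𝒮, S.Nonempty ∧ #S ≤ r) (hlt : r * m * k < #𝒮) :
    (∃ D ⊆ 𝒮, #D = m + 1 ∧ (D : Set (Finset α)).PairwiseDisjoint id) ∨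
      ∃ x, k < #{S ∈ 𝒮 | x ∈ S} := by
  obtain ⟨D, hD𝒮, hDdisj, hDmax⟩ := exists_pairwiseDisjoint_forall_not_disjoint 𝒮
  by_cases hD : m + 1 ≤ #D
  · obtain ⟨D', hD'D, hD'⟩ := exists_subset_card_eq hD
    exact .inl ⟨D', hD'D.trans hD𝒮, hD', hDdisj.subset hD'D⟩
  right
  have hA : #(D.biUnion id) ≤ r * m :=
    calc _ ≤ #D * r := card_biUnion_le_card_mul D id r fun S hS => (h𝒮 S (hD𝒮 hS)).2
      _ ≤ r * m := by rw [mul_comm]; gcongr; omega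
  have hcover : ∀ S ∈ 𝒮, ∃ x ∈ D.biUnion id, x ∈ S := by
    intro S hS
    by_cases hSD : S ∈ D
    · obtain ⟨x, hx⟩ := (h𝒮 S hS).1
      exact ⟨x, mem_biUnion.2 ⟨S, hSD, hx⟩, hx⟩
    · obtain ⟨T, hT, hST⟩ := hDmax S hS hSD
      obtain ⟨x, hxS, hxT⟩ := not_disjoint_iff.1 hST
      exact ⟨x, mem_biUnion.2 ⟨T, hT, hxT⟩, hxS⟩
  obtain ⟨x, -, hx⟩ := exists_lt_card_filter_mem_of_mul_lt_card hcover
    ((Nat.mul_le_mul_right k hA).trans_lt hlt)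
  exact ⟨x, hx⟩

theorem exists_isSunflower_of_factorial_mul_pow_lt_card (s m : ℕ) {𝒮 : Finset (Finset α)}
    (h𝒮 : ∀ S ∈ 𝒮, #S = s) (hlt : s ! * m ^ s < #𝒮) :
    ∃ 𝒮' ⊆ 𝒮, #𝒮' = m + 1 ∧ ∃ J : Finset α, #J < s ∧ IsSunflower 𝒮' J := by
  induction s generalizing 𝒮 with
  | zero =>
    have : #𝒮 ≤ 1 := card_le_one.2 fun S₁ h₁ S₂ h₂ => by
      rw [card_eq_zero.1 (h𝒮 S₁ h₁), card_eq_zero.1 (h𝒮 S₂ h₂)]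
    simp only [factorial_zero, pow_zero, mul_one] at hlt
    omega
  | succ s ih =>
    have hsize : ∀ S ∈ 𝒮, S.Nonempty ∧ #S ≤ s + 1 := fun S hS =>
      ⟨card_pos.1 (by rw [h𝒮 S hS]; omega), (h𝒮 S hS).le⟩
    have hlt' : (s + 1) * m * (s ! * m ^ s) < #𝒮 := by
      convert hlt using 1
      rw [factorial_succ, pow_succ]
      ring
    rcases exists_pairwiseDisjoint_or_lt_card_filter_mem hsize hlt' with
      ⟨D, hD𝒮, hD, hDdisj⟩ | ⟨x, hx⟩
    · exact ⟨D, hD𝒮, hD, ∅, by simp, isSunflower_empty_of_pairwiseDisjoint hDdisj⟩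
    rw [← card_memberSubfamily] at hx
    obtain ⟨𝒯, h𝒯, h𝒯card, J, hJ, h𝒯J⟩ := ih (fun _ => card_of_mem_memberSubfamily h𝒮) hx
    obtain ⟨𝒮', h𝒮', h𝒮'card, h𝒮'J⟩ := exists_isSunflower_of_subset_memberSubfamily h𝒯 h𝒯J
    exact ⟨𝒮', h𝒮', h𝒮'card.trans h𝒯card, insert x J,
      (card_insert_le x J).trans_lt (by omega), h𝒮'J⟩

end Sunflower

end Finset

theorem statement1 :
    ∃ f : ℕ × ℕ → ℕ, ∀ s n : ℕ, 0 < s → 0 < n →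
      ∀ {α : Type u} [DecidableEq α] (𝒮 : Finset (Finset α)),
        (∀ S ∈ 𝒮, S.card = s) → f (s, n) ≤ 𝒮.card →
        ∃ 𝒮' ⊆ 𝒮, 𝒮'.card = n ∧ ∃ J : Finset α, J.card < s ∧
          ∀ S₁ ∈ 𝒮', ∀ S₂ ∈ 𝒮', S₁ ≠ S₂ → S₁ ∩ S₂ = J := by
  refine ⟨fun p => p.1 ! * p.2 ^ p.1 + 1, fun s n _ _ α _ 𝒮 h𝒮 hlt => ?_⟩
  obtain ⟨𝒮'', h𝒮'', h𝒮''card, J, hJ, h𝒮''J⟩ :=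
    exists_isSunflower_of_factorial_mul_pow_lt_card s n h𝒮 hlt
  obtain ⟨𝒮', h𝒮', h𝒮'card⟩ := exists_subset_card_eq (h𝒮''card ▸ n.le_succ : n ≤ #𝒮'')
  exact ⟨𝒮', h𝒮'.trans h𝒮'', h𝒮'card, J, hJ, h𝒮''J.mono h𝒮'⟩
end

section
/- Let M be a finite matroid, let k be a nonnegative integer, and let 𝒞 be a collection of circuits of M such that, for some J ⊆ E(M) with |J| ≤ k, we have C ∩ C' = J for all distinct C, C' ∈ 𝒞. Then for every subcollection {C₁, …, C_{2^k}} ⊆ 𝒞 consisting of 2^k distinct circuits, there is a circuit of M contained in (C₁ ∪ ⋯ ∪ C_{2^k}) − J. -/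
open Set

/-- A circuit of a matroid: a minimal dependent set. -/
def IsCircuit {α : Type*} (M : Matroid α) (C : Set α) : Prop :=
  M.Dep C ∧ ∀ D, D ⊂ C → ¬ M.Dep D

/-!
Induction on `|J|`. If `J` is empty any member of the family is a circuit avoiding `J`.
Otherwise fix `e ∈ J` and group the circuits through `e` in pairs; eliminating `e` from each
pair yields a circuit avoiding `e` inside their union. Together with the circuits that already
avoid `e`, this gives at least half as many circuits, all avoiding `e`, whose pairwise
intersections lie in `J \ {e}`; as `J` is independent, the new circuits are distinct from
the old ones. Independence of `J` holds because it is the intersection of two distinct circuits.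
-/

lemma isCircuit_iff_matroid_isCircuit {α : Type*} {M : Matroid α} {C : Set α} :
    IsCircuit M C ↔ M.IsCircuit C :=
  minimal_iff_forall_ssubset.symm

namespace Matroid

variable {α : Type*} {M : Matroid α}

lemma IsCircuit.inter_indep {C C' : Set α} (hC : M.IsCircuit C) (hC' : M.IsCircuit C')
    (hne : C ≠ C') : M.Indep (C ∩ C') := by
  refine hC.ssubset_indep (inter_subset_left.ssubset_of_ne fun h ↦ hne ?_)
  exact hC.eq_of_subset_isCircuit hC' (h ▸ inter_subset_right)

open Finset in
lemma exists_isCircuit_family_notMem_card_half_le {I : Set α} (hI : M.Indep I)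
    (e : α) (𝒟 : Finset (Set α)) (h𝒟 : ∀ C ∈ 𝒟, M.IsCircuit C)
    (hpair : (𝒟 : Set (Set α)).Pairwise fun C C' ↦ C ∩ C' ⊆ I) :
    ∃ 𝒟' : Finset (Set α), (∀ C ∈ 𝒟', M.IsCircuit C ∧ e ∉ C ∧ C ⊆ ⋃ D ∈ 𝒟, D) ∧
      (𝒟' : Set (Set α)).Pairwise (fun C C' ↦ C ∩ C' ⊆ I) ∧ #𝒟 / 2 ≤ #𝒟' := by
  classical
  induction 𝒟 using Finset.strongInduction with
  | H 𝒟 ih =>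
  by_cases h : ∃ C₁ ∈ 𝒟, ∃ C₂ ∈ 𝒟, C₁ ≠ C₂ ∧ e ∈ C₁ ∧ e ∈ C₂
  · obtain ⟨C₁, h₁, C₂, h₂, hne, -, -⟩ := h
    obtain ⟨D, hDsub, hD⟩ := (h𝒟 C₁ h₁).elimination (h𝒟 C₂ h₂) hne e
    set 𝒟₀ := (𝒟.erase C₁).erase C₂
    have h𝒟₀ : 𝒟₀ ⊂ 𝒟 := (erase_subset _ _).trans_ssubset (erase_ssubset h₁)
    obtain ⟨𝒟₀', hmem, hpair₀, hcard⟩ := ih 𝒟₀ h𝒟₀ (fun C hC ↦ h𝒟 C (h𝒟₀.subset hC))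
      (hpair.mono (by simpa using h𝒟₀.subset))
    have hD_inter : ∀ C ∈ 𝒟₀', D ∩ C ⊆ I := by
      rintro C hC x ⟨hxD, hxC⟩
      obtain ⟨C', hC', hxC'⟩ := mem_iUnion₂.mp ((hmem C hC).2.2 hxC)
      have hC'₂ : C' ≠ C₂ := ne_of_mem_erase hC'
      have hC'₁ : C' ≠ C₁ := ne_of_mem_erase (mem_of_mem_erase hC')
      rcases (hDsub hxD).1 with hx₁ | hx₂
      · exact hpair h₁ (h𝒟₀.subset hC') hC'₁.symm ⟨hx₁, hxC'⟩
      · exact hpair h₂ (h𝒟₀.subset hC') hC'₂.symm ⟨hx₂, hxC'⟩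
    have hD_notMem : D ∉ 𝒟₀' := fun hD' ↦
      hD.not_indep (hI.subset (by simpa using hD_inter D hD'))
    have hD_union : D ⊆ ⋃ C ∈ 𝒟, C := hDsub.trans <| sdiff_subset.trans <|
      union_subset (subset_biUnion_of_mem (u := id) h₁) (subset_biUnion_of_mem (u := id) h₂)
    refine ⟨insert D 𝒟₀', ?_, ?_, ?_⟩
    · simp only [Finset.mem_insert, forall_eq_or_imp]
      refine ⟨⟨hD, fun he ↦ (hDsub he).2 rfl, hD_union⟩, fun C hC ↦ ?_⟩
      obtain ⟨hC, heC, hCsub⟩ := hmem C hC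
      exact ⟨hC, heC, hCsub.trans (biUnion_mono (by simpa using h𝒟₀.subset) fun _ _ ↦ le_rfl)⟩
    · rw [coe_insert, pairwise_insert]
      exact ⟨hpair₀, fun C hC _ ↦ ⟨hD_inter C hC, inter_comm D C ▸ hD_inter C hC⟩⟩
    · have h₂' : #𝒟₀ + 1 = #(𝒟.erase C₁) :=
        card_erase_add_one (mem_erase.mpr ⟨hne.symm, h₂⟩)
      have h₁' : #(𝒟.erase C₁) + 1 = #𝒟 := card_erase_add_one h₁
      rw [card_insert_of_notMem hD_notMem]
      omega
  · push Not at h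
    refine ⟨𝒟.filter (e ∉ ·), fun C hC ↦ ?_, hpair.mono (coe_subset.mpr (filter_subset _ _)), ?_⟩
    · rw [mem_filter] at hC
      exact ⟨h𝒟 C hC.1, hC.2, subset_biUnion_of_mem (u := id) hC.1⟩
    · have hle : #(𝒟.filter (e ∈ ·)) ≤ 1 := card_le_one.mpr fun C₁ h₁ C₂ h₂ ↦ by
        rw [mem_filter] at h₁ h₂
        by_contra hne
        exact h C₁ h₁.1 C₂ h₂.1 hne h₁.2 h₂.2
      have := card_filter_add_card_filter_not (s := 𝒟) (p := (e ∈ ·))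
      omega

open Finset in
theorem exists_isCircuit_subset_biUnion_sdiff {J : Set α} (hJ : M.Indep J) (hJfin : J.Finite)
    {𝒟 : Finset (Set α)} (h𝒟 : ∀ C ∈ 𝒟, M.IsCircuit C)
    (hpair : (𝒟 : Set (Set α)).Pairwise fun C C' ↦ C ∩ C' ⊆ J) (hcard : 2 ^ J.ncard ≤ #𝒟) :
    ∃ C, M.IsCircuit C ∧ C ⊆ (⋃ D ∈ 𝒟, D) \ J := by
  induction J, hJfin using Set.Finite.induction_on generalizing 𝒟 with
  | empty =>
    obtain ⟨C, hC⟩ := card_pos.mp (by simpa using hcard)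
    exact ⟨C, h𝒟 C hC, by simpa using subset_biUnion_of_mem (u := id) hC⟩
  | @insert e J heJ hJfin ih =>
    obtain ⟨𝒟', hmem, hpair', hcard'⟩ :=
      exists_isCircuit_family_notMem_card_half_le hJ e 𝒟 h𝒟 hpair
    have hpairJ : (𝒟' : Set (Set α)).Pairwise fun C C' ↦ C ∩ C' ⊆ J :=
      hpair'.imp_on fun C hC _ _ _ h x hx ↦
        (h hx).resolve_left fun hxe ↦ (hmem C hC).2.1 (hxe ▸ hx.1)
    have h2 : 2 ^ J.ncard ≤ #𝒟' := by
      rw [ncard_insert_of_notMem heJ hJfin, pow_succ] at hcard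
      exact ((Nat.le_div_iff_mul_le two_pos).mpr hcard).trans hcard'
    obtain ⟨C, hC, hCsub⟩ := ih (hJ.subset (subset_insert e J)) (fun C hC ↦ (hmem C hC).1)
      hpairJ h2
    refine ⟨C, hC, fun x hxC ↦ ?_⟩
    obtain ⟨hxU, hxJ⟩ := hCsub hxC
    obtain ⟨D, hD, hxD⟩ := mem_iUnion₂.mp hxU
    obtain ⟨-, heD, hDsub⟩ := hmem D hD
    exact ⟨hDsub hxD, by rintro (rfl | hx) <;> contradiction⟩

end Matroid

theorem statement2 {α : Type*} (M : Matroid α) (_hfin : M.E.Finite) (k : ℕ)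
    (𝒞 : Set (Set α)) (h𝒞 : ∀ C ∈ 𝒞, IsCircuit M C)
    (J : Set α) (hJ : J ⊆ M.E) (hJk : J.ncard ≤ k)
    (hint : ∀ C ∈ 𝒞, ∀ C' ∈ 𝒞, C ≠ C' → C ∩ C' = J)
    (𝒞' : Finset (Set α)) (hsub : ↑𝒞' ⊆ 𝒞) (hcard : 𝒞'.card = 2 ^ k) :
    ∃ C, IsCircuit M C ∧ C ⊆ (⋃ D ∈ 𝒞', D) \ J := by
  have hcirc : ∀ C ∈ 𝒞', M.IsCircuit C := fun C hC ↦
    isCircuit_iff_matroid_isCircuit.mp (h𝒞 C (hsub hC))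
  have hJfin : J.Finite := _hfin.subset hJ
  have hJi : M.Indep J := by
    rcases Nat.eq_zero_or_pos k with rfl | hk
    · rw [(ncard_eq_zero hJfin).mp (by omega)]
      exact M.empty_indep
    · obtain ⟨C, hC, C', hC', hne⟩ :=
        Finset.one_lt_card.mp (hcard ▸ Nat.one_lt_two_pow hk.ne')
      rw [← hint C (hsub hC) C' (hsub hC') hne]
      exact (hcirc C hC).inter_indep (hcirc C' hC') hne
  obtain ⟨C, hC, hCsub⟩ := M.exists_isCircuit_subset_biUnion_sdiff hJi hJfin hcirc
    (fun C hC C' hC' hne ↦ (hint C (hsub hC) C' (hsub hC') hne).subset)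
    (hcard ▸ Nat.pow_le_pow_right two_pos hJk)
  exact ⟨C, isCircuit_iff_matroid_isCircuit.mpr hC, hCsub⟩
end

section
/- Let M be a finite matroid with the (t,2t)-property. If M has a t-echidna (S₁, …, S_n) with n ≥ 3t − 1, then (S₁, …, S_n) is also a t-coechidna of M, i.e. the union of any t of the S_i is a cocircuit of M. -/
open Set

/-- A cocircuit of a matroid: a circuit of the dual. -/
def IsCocircuit {α : Type*} (M : Matroid α) (C : Set α) : Prop :=
  IsCircuit M✶ C

/-- `M` has the `(t,ℓ)`-property: every `t`-element subset of the ground set is contained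
in an `ℓ`-element circuit and an `ℓ`-element cocircuit. -/
def HasTLProperty {α : Type*} (M : Matroid α) (t ℓ : ℕ) : Prop :=
  ∀ X ⊆ M.E, X.ncard = t →
    (∃ C, IsCircuit M C ∧ C.ncard = ℓ ∧ X ⊆ C) ∧
    (∃ C, IsCocircuit M C ∧ C.ncard = ℓ ∧ X ⊆ C)

/-- A `t`-echidna of order `n` in `M`: a partition `(S 1, …, S n)` of a subset of the
ground set into `2`-element sets such that the union of any `t` of them is a circuit. -/
def IsEchidna {α : Type*} (M : Matroid α) (t : ℕ) {n : ℕ} (S : Fin n → Set α) : Prop :=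
  (∀ i, (S i).ncard = 2) ∧ (∀ i, S i ⊆ M.E) ∧
    (∀ i j, i ≠ j → Disjoint (S i) (S j)) ∧
    ∀ I : Finset (Fin n), I.card = t → IsCircuit M (⋃ i ∈ I, S i)

/-!
Fix `t` parts `S i`, `i ∈ I`, pick one element from each, and let `K` be a `2t`-element
cocircuit containing these `t` elements. At most `2t` parts meet `K`, so since `n ≥ 3t - 1`
any part `S j` meeting `K` can be padded with `t - 1` parts disjoint from `K` to a circuit
whose intersection with `K` is `S j ∩ K`. By orthogonality this intersection is not a
singleton, so `S j ⊆ K`. Hence the `2t` elements of `⋃ i ∈ I, S i` lie in `K`, which has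
`2t` elements, and the union is the cocircuit `K`.
-/

section

open Finset Function
open scoped Classical

variable {α ι : Type*}

lemma isCircuit_iff_isCircuit {M : Matroid α} {C : Set α} : IsCircuit M C ↔ M.IsCircuit C := by
  rw [Matroid.IsCircuit, minimal_iff_forall_ssubset]
  rfl

lemma isCocircuit_iff_isCocircuit {M : Matroid α} {K : Set α} :
    IsCocircuit M K ↔ M.IsCocircuit K :=
  isCircuit_iff_isCircuit

lemma Set.subset_of_ncard_eq_two {A K : Set α} (hA : A.ncard = 2) (hAK : (A ∩ K).Nontrivial) :
    A ⊆ K := by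
  have hAfin : A.Finite := finite_of_ncard_pos (by omega)
  have hle : A.ncard ≤ (A ∩ K).ncard := by
    rw [hA]
    exact one_lt_ncard_iff_nontrivial_and_finite.2 ⟨hAK, hAfin.subset inter_subset_left⟩
  rw [← inter_eq_left, eq_of_subset_of_ncard_le inter_subset_left hle hAfin]

variable {S : ι → Set α}

lemma card_filter_inter_nonempty_le_ncard [Fintype ι] (hS : Pairwise (Disjoint on S))
    {K : Set α} (hK : K.Finite) : #{i | (S i ∩ K).Nonempty} ≤ K.ncard := by
  rw [ncard_eq_toFinset_card K hK]
  refine card_le_card_of_forall_subsingleton (fun i z ↦ z ∈ S i) ?_ ?_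
  · intro i hi
    obtain ⟨z, hzS, hzK⟩ := (mem_filter.1 hi).2
    exact ⟨z, hK.mem_toFinset.2 hzK, hzS⟩
  · intro z _ i hi j hj
    by_contra hij
    exact (hS hij).ne_of_mem hi.2 hj.2 rfl

lemma exists_ncard_eq_card_inter_nonempty (hS : Pairwise (Disjoint on S))
    (hne : ∀ i, (S i).Nonempty) (I : Finset ι) :
    ∃ X ⊆ ⋃ i ∈ I, S i, X.ncard = #I ∧ ∀ i ∈ I, (S i ∩ X).Nonempty := by
  choose x hx using hne
  have hinj : InjOn x I := fun i _ j _ hij ↦ by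
    by_contra hne
    exact (hS hne).ne_of_mem (hx i) (hx j) hij
  refine ⟨x '' I, ?_, by rw [hinj.ncard_image, ncard_coe_finset],
    fun i hi ↦ ⟨x i, hx i, i, hi, rfl⟩⟩
  rintro _ ⟨i, hi, rfl⟩
  exact mem_biUnion hi (hx i)

lemma ncard_biUnion_of_ncard_eq_two (hS : Pairwise (Disjoint on S)) (h2 : ∀ i, (S i).ncard = 2)
    (I : Finset ι) : (⋃ i ∈ I, S i).ncard = 2 * #I := by
  have hfin : ∀ i ∈ (I : Set ι), (S i).Finite :=
    fun i _ ↦ finite_of_ncard_pos (by rw [h2]; omega)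
  have := I.finite_toSet.ncard_biUnion hfin (fun i _ j _ hij ↦ hS hij)
  simp only [mem_coe, h2] at this
  rw [this, finsum_mem_finset_eq_sum, sum_const, smul_eq_mul, mul_comm]

lemma inter_isCocircuit_nontrivial {n t : ℕ} {M : Matroid α} {S : Fin n → Set α} {K : Set α}
    (hS : ∀ I : Finset (Fin n), #I = t → M.IsCircuit (⋃ i ∈ I, S i)) (hK : M.IsCocircuit K)
    (ht : 0 < t) (hcount : #{i | (S i ∩ K).Nonempty} + t ≤ n + 1) {j : Fin n}
    (hj : (S j ∩ K).Nonempty) : (S j ∩ K).Nontrivial := by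
  set J : Finset (Fin n) := {i | (S i ∩ K).Nonempty}
  have hjJ : j ∈ J := mem_filter.2 ⟨mem_univ j, hj⟩
  have hcompl : t ≤ #(insert j Jᶜ) := by
    rw [card_insert_of_notMem (by simpa), card_compl, Fintype.card_fin]
    omega
  obtain ⟨L, hjL, hLJ, hL⟩ := exists_subsuperset_card_eq
    (singleton_subset_iff.2 (mem_insert_self j Jᶜ)) ((Finset.card_singleton j).trans_le ht) hcompl
  have hLK : (⋃ i ∈ L, S i) ∩ K = S j ∩ K := by
    refine Subset.antisymm ?_
      (inter_subset_inter_left _ (subset_biUnion_of_mem (singleton_subset_iff.1 hjL)))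
    rintro z ⟨hzL, hzK⟩
    obtain ⟨i, hiL, hzi⟩ := mem_iUnion₂.1 hzL
    obtain rfl | hiJ := mem_insert.1 (hLJ hiL)
    · exact ⟨hzi, hzK⟩
    · exact absurd (mem_filter.2 ⟨mem_univ i, z, hzi, hzK⟩) (mem_compl.1 hiJ)
  rw [← hLK]
  exact (hS L hL).isCocircuit_inter_nontrivial hK (hLK ▸ hj)

variable {M : Matroid α} {t n : ℕ} {S : Fin n → Set α}

lemma IsEchidna.pairwise_disjoint (h : IsEchidna M t S) : Pairwise (Disjoint on S) :=
  fun i j hij ↦ h.2.2.1 i j hij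

lemma IsEchidna.isCircuit_biUnion (h : IsEchidna M t S) {I : Finset (Fin n)} (hI : #I = t) :
    M.IsCircuit (⋃ i ∈ I, S i) :=
  isCircuit_iff_isCircuit.1 (h.2.2.2 I hI)

lemma IsEchidna.pos (h : IsEchidna M t S) : 0 < t := by
  by_contra! ht
  simpa using (h.isCircuit_biUnion (I := ∅) (by simp; omega)).dep.not_indep

lemma IsEchidna.biUnion_eq_of_isCocircuit (h : IsEchidna M t S) (hn : 3 * t - 1 ≤ n)
    {K : Set α} (hK : M.IsCocircuit K) (hKcard : K.ncard = 2 * t) {I : Finset (Fin n)}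
    (hI : #I = t) (hIK : ∀ i ∈ I, (S i ∩ K).Nonempty) : ⋃ i ∈ I, S i = K := by
  have ht := h.pos
  have hKfin : K.Finite := finite_of_ncard_pos (by omega)
  have hcount := card_filter_inter_nonempty_le_ncard h.pairwise_disjoint hKfin
  have hsub : ∀ i ∈ I, S i ⊆ K := fun i hi ↦ subset_of_ncard_eq_two (h.1 i)
    (inter_isCocircuit_nontrivial (fun _ ↦ h.isCircuit_biUnion) hK ht (by omega) (hIK i hi))
  refine eq_of_subset_of_ncard_le (iUnion₂_subset hsub) ?_ hKfin
  rw [ncard_biUnion_of_ncard_eq_two h.pairwise_disjoint h.1, hI, hKcard]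

end

theorem statement5_general {α : Type*} (M : Matroid α) (t n : ℕ)
    (hprop : HasTLProperty M t (2 * t)) (hn : 3 * t - 1 ≤ n)
    (S : Fin n → Set α) (hech : IsEchidna M t S) :
    IsEchidna M✶ t S := by
  refine ⟨hech.1, hech.2.1, hech.2.2.1, fun I hI ↦ ?_⟩
  obtain ⟨X, hXS, hXcard, hXmeet⟩ := exists_ncard_eq_card_inter_nonempty hech.pairwise_disjoint
    (fun i ↦ nonempty_of_ncard_ne_zero (by rw [hech.1 i]; omega)) I
  obtain ⟨K, hK, hKcard, hXK⟩ :=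
    (hprop X (hXS.trans (iUnion₂_subset fun i _ ↦ hech.2.1 i)) (hXcard.trans hI)).2
  rw [hech.biUnion_eq_of_isCocircuit hn (isCocircuit_iff_isCocircuit.1 hK) hKcard hI
    fun i hi ↦ (hXmeet i hi).mono (inter_subset_inter_right _ hXK)]
  exact hK

theorem statement5 {α : Type*} (M : Matroid α) (hfin : M.E.Finite) (t n : ℕ) (ht : 0 < t)
    (hprop : HasTLProperty M t (2 * t)) (hn : 3 * t - 1 ≤ n)
    (S : Fin n → Set α) (hech : IsEchidna M t S) :
    IsEchidna M✶ t S :=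
  statement5_general M t n hprop hn S hech
end
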